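/- Let P ≥ 0, k = sqrt((P+1)² + 1), h = 1 − sqrt((k−1)/(k+1)), and f(x) = (k−1)/(1−x)³ for 0 ≤ x < h, f(x) = 0 for h ≤ x ≤ 1. Let u1(a,b) = b(1−a) − a·P + θ(a,b)(1−a)(1−b) with θ(a,b) = 1 if a > b, 1/2 if a = b, 0 otherwise, and define U(a) = ∫_0^1 u1(a,y)·f(y) dy. Then U(a) = k − 1 − P for every a ∈ [0,h], and U(a) ≤ k − 1 − P for every a ∈ [0,1]. Hence the symmetric profile in which both players draw their move with density f is a Nash equilibrium with equilibrium utility u* = k − (P+1) for each player. -/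

import Mathlib

/-!
Against the density `c/(1-y)³` on `[0,h)`, the move `a` beats exactly the draws `y < a`, and
`(A + B(1-y))/(1-y)³` has the antiderivative `A/(2(1-y)²) + B/(1-y)`, so `U` has a closed
form: affine in `a` on `[0,h]`, and `1 - a(1+P)` on `[h,1]`. The choice of `k` and `h` gives
`(k-1)/(1-h)² = k+1` and `(k-1)/(1-h) = P+1`, which is exactly what makes the slope on `[0,h]`
vanish; beyond `h` the payoff decreases.
-/

open MeasureTheory

/-- Tie-breaking function: 1 if `a > b`, 1/2 if `a = b`, 0 if `a < b`. -/
noncomputable def theta (a b : ℝ) : ℝ :=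
  if a > b then 1 else if a = b then 1 / 2 else 0

/-- Expected utility of Player 1 in the two-player CfR game with penalty `P`
and reward `R = 1`. -/
noncomputable def u1 (P a b : ℝ) : ℝ :=
  b * (1 - a) - a * P + theta a b * ((1 - a) * (1 - b))

open Set

lemma intervalIntegrable_affine_div_one_sub_pow_three (A B : ℝ) {p q : ℝ} (hp : p < 1)
    (hq : q < 1) :
    IntervalIntegrable (fun y => (A + B * (1 - y)) / (1 - y) ^ 3) volume p q := by
  refine ContinuousOn.intervalIntegrable
    (ContinuousOn.div (by fun_prop) (by fun_prop) fun y hy => ?_)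
  exact pow_ne_zero _ (sub_ne_zero.mpr (hy.2.trans_lt (max_lt hp hq)).ne')

lemma integral_affine_div_one_sub_pow_three (A B : ℝ) {p q : ℝ} (hp : p < 1) (hq : q < 1) :
    ∫ y in p..q, (A + B * (1 - y)) / (1 - y) ^ 3 =
      (A / (2 * (1 - q) ^ 2) + B / (1 - q)) - (A / (2 * (1 - p) ^ 2) + B / (1 - p)) := by
  refine intervalIntegral.integral_eq_sub_of_hasDerivAt
    (f := fun y => A / (2 * (1 - y) ^ 2) + B / (1 - y)) (fun y hy => ?_)
    (intervalIntegrable_affine_div_one_sub_pow_three A B hp hq)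
  have hy1 : (1 : ℝ) - y ≠ 0 := sub_ne_zero.mpr (hy.2.trans_lt (max_lt hp hq)).ne'
  have hd : HasDerivAt (fun y : ℝ => 1 - y) (-1) y := by
    simpa using (hasDerivAt_id y).const_sub 1
  refine (((hasDerivAt_const y A).div ((hd.pow 2).const_mul 2) (by simp [hy1])).add
    ((hasDerivAt_const y B).div hd hy1)).congr_deriv ?_
  simp only [Pi.pow_apply]
  field_simp
  ring

lemma integral_eq_of_eqOn_affine_div_one_sub_pow_three {F : ℝ → ℝ} {A B p q : ℝ}
    (hpq : p ≤ q) (hq : q < 1)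
    (hF : EqOn F (fun y => (A + B * (1 - y)) / (1 - y) ^ 3) (Ioo p q)) :
    IntervalIntegrable F volume p q ∧ ∫ y in p..q, F y =
      (A / (2 * (1 - q) ^ 2) + B / (1 - q)) - (A / (2 * (1 - p) ^ 2) + B / (1 - p)) := by
  rw [← uIoo_of_le hpq] at hF
  exact ⟨(intervalIntegrable_affine_div_one_sub_pow_three A B (hpq.trans_lt hq) hq).congr_uIoo
    hF.symm, (intervalIntegral.integral_congr_uIoo hF).trans
    (integral_affine_div_one_sub_pow_three A B (hpq.trans_lt hq) hq)⟩

lemma u1_of_lt {P a b : ℝ} (hba : b < a) : u1 P a b = 1 - a * (1 + P) := by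
  rw [u1, theta, if_pos hba]
  ring

lemma u1_of_gt {P a b : ℝ} (hab : a < b) :
    u1 P a b = 1 - a * (1 + P) - (1 - a) * (1 - b) := by
  rw [u1, theta, if_neg hab.not_gt, if_neg hab.ne]
  ring

section Density

noncomputable def equilibriumDensity (c h x : ℝ) : ℝ :=
  if x < h then c / (1 - x) ^ 3 else 0

variable {P c h a p q : ℝ} {f : ℝ → ℝ}

lemma eqOn_u1_mul_density_below
    (hf : EqOn f (equilibriumDensity c h) (Icc 0 1))
    (hh : h ≤ 1) (hp : 0 ≤ p) (hqa : q ≤ a) (hqh : q ≤ h) :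
    EqOn (fun y => u1 P a y * f y)
      (fun y => (c * (1 - a * (1 + P)) + 0 * (1 - y)) / (1 - y) ^ 3) (Ioo p q) := by
  intro y ⟨hpy, hyq⟩
  have hyh : y < h := hyq.trans_le hqh
  dsimp only
  rw [u1_of_lt (hyq.trans_le hqa), hf ⟨hp.trans hpy.le, by linarith⟩, equilibriumDensity,
    if_pos hyh]
  ring

lemma eqOn_u1_mul_density_above
    (hf : EqOn f (equilibriumDensity c h) (Icc 0 1))
    (hh : h ≤ 1) (hp : 0 ≤ p) (hap : a ≤ p) (hqh : q ≤ h) :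
    EqOn (fun y => u1 P a y * f y)
      (fun y => (c * (1 - a * (1 + P)) + -(c * (1 - a)) * (1 - y)) / (1 - y) ^ 3)
      (Ioo p q) := by
  intro y ⟨hpy, hyq⟩
  have hyh : y < h := hyq.trans_le hqh
  dsimp only
  rw [u1_of_gt (hap.trans_lt hpy), hf ⟨hp.trans hpy.le, by linarith⟩, equilibriumDensity,
    if_pos hyh]
  ring

lemma integral_tail_u1_mul_density_eq_zero
    (hf : EqOn f (equilibriumDensity c h) (Icc 0 1))
    (hh0 : 0 ≤ h) (hh : h ≤ 1) :
    IntervalIntegrable (fun y => u1 P a y * f y) volume h 1 ∧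
      ∫ y in h..1, u1 P a y * f y = 0 := by
  have hzero : EqOn (fun y => u1 P a y * f y) 0 (uIoo h 1) := by
    rw [uIoo_of_le hh]
    intro y ⟨hhy, hy1⟩
    simp only [Pi.zero_apply]
    rw [hf ⟨hh0.trans hhy.le, hy1.le⟩, equilibriumDensity, if_neg hhy.not_gt, mul_zero]
  exact ⟨(intervalIntegrable_congr_uIoo hzero).mpr intervalIntegrable_const,
    (intervalIntegral.integral_congr_uIoo hzero).trans intervalIntegral.integral_zero⟩

lemma integral_u1_mul_density_of_le
    (hf : EqOn f (equilibriumDensity c h) (Icc 0 1))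
    (hh : h < 1) (ha0 : 0 ≤ a) (hah : a ≤ h) :
    ∫ y in (0 : ℝ)..1, u1 P a y * f y =
      (1 - a * (1 + P)) * (c / (1 - h) ^ 2 - c) / 2 - (1 - a) * (c / (1 - h)) + c := by
  have ha1 : a < 1 := hah.trans_lt hh
  obtain ⟨i₁, e₁⟩ := integral_eq_of_eqOn_affine_div_one_sub_pow_three ha0 ha1
    (eqOn_u1_mul_density_below (P := P) hf hh.le le_rfl le_rfl hah)
  obtain ⟨i₂, e₂⟩ := integral_eq_of_eqOn_affine_div_one_sub_pow_three hah hh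
    (eqOn_u1_mul_density_above (P := P) hf hh.le ha0 le_rfl le_rfl)
  obtain ⟨i₃, e₃⟩ :=
    integral_tail_u1_mul_density_eq_zero (P := P) (a := a) hf (ha0.trans hah) hh.le
  rw [← intervalIntegral.integral_add_adjacent_intervals (i₁.trans i₂) i₃,
    ← intervalIntegral.integral_add_adjacent_intervals i₁ i₂, e₁, e₂, e₃]
  have : 1 - a ≠ 0 := by linarith
  have : 1 - h ≠ 0 := by linarith
  field_simp
  ring

lemma integral_u1_mul_density_of_ge
    (hf : EqOn f (equilibriumDensity c h) (Icc 0 1))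
    (hh0 : 0 ≤ h) (hh : h < 1) (hha : h ≤ a) :
    ∫ y in (0 : ℝ)..1, u1 P a y * f y = (1 - a * (1 + P)) * (c / (1 - h) ^ 2 - c) / 2 := by
  obtain ⟨i₁, e₁⟩ := integral_eq_of_eqOn_affine_div_one_sub_pow_three hh0 hh
    (eqOn_u1_mul_density_below (P := P) hf hh.le le_rfl hha le_rfl)
  obtain ⟨i₂, e₂⟩ := integral_tail_u1_mul_density_eq_zero (P := P) (a := a) hf hh0 hh.le
  rw [← intervalIntegral.integral_add_adjacent_intervals i₁ i₂, e₁, e₂]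
  field_simp
  ring

end Density

lemma equilibrium_parameters {P k h : ℝ} (hP : -1 < P) (hk : k = Real.sqrt ((P + 1) ^ 2 + 1))
    (hh : h = 1 - Real.sqrt ((k - 1) / (k + 1))) :
    0 < h ∧ h < 1 ∧ (k - 1) / (1 - h) ^ 2 = k + 1 ∧ (k - 1) / (1 - h) = P + 1 := by
  have hk2 : k ^ 2 = (P + 1) ^ 2 + 1 := hk ▸ Real.sq_sqrt (by positivity)
  have hPk : P + 1 < k := by
    rw [hk]
    exact Real.lt_sqrt_of_sq_lt (by linarith)
  have hk1 : k + 1 ≠ 0 := by linarith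
  have hs : 1 - h = (P + 1) / (k + 1) := by
    have hsq : (k - 1) / (k + 1) = ((P + 1) / (k + 1)) ^ 2 := by
      field_simp
      linear_combination hk2
    rw [hh, sub_sub_cancel, hsq, Real.sqrt_sq (div_nonneg (by linarith) (by linarith))]
  have hP1 : P + 1 ≠ 0 := by linarith
  refine ⟨?_, ?_, ?_, ?_⟩
  · have : (P + 1) / (k + 1) < 1 := (div_lt_one (by linarith)).mpr (by linarith)
    linarith
  · have : 0 < (P + 1) / (k + 1) := div_pos (by linarith) (by linarith)
    linarith
  · rw [hs]
    field_simp
    linear_combination hk2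
  · rw [hs]
    field_simp
    linear_combination hk2

theorem stmt5 (P : ℝ) (hP : 0 ≤ P) (k h : ℝ)
    (hk : k = Real.sqrt ((P + 1) ^ 2 + 1))
    (hh : h = 1 - Real.sqrt ((k - 1) / (k + 1)))
    (f : ℝ → ℝ)
    (hf : ∀ x ∈ Set.Icc (0 : ℝ) 1,
      f x = if x < h then (k - 1) / (1 - x) ^ 3 else 0)
    (U : ℝ → ℝ)
    (hU : ∀ a, U a = ∫ y in (0 : ℝ)..1, u1 P a y * f y) :
    (∀ a ∈ Set.Icc (0 : ℝ) h, U a = k - 1 - P) ∧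
    (∀ a ∈ Set.Icc (0 : ℝ) 1, U a ≤ k - 1 - P) := by
  obtain ⟨hh0, hh1, hsq, hlin⟩ := equilibrium_parameters (by linarith) hk hh
  have hle : ∀ a ∈ Icc (0 : ℝ) h, U a = k - 1 - P := by
    rintro a ⟨ha0, hah⟩
    rw [hU, integral_u1_mul_density_of_le hf hh1 ha0 hah, hsq, hlin]
    ring
  refine ⟨hle, fun a ha => ?_⟩
  rcases le_total a h with hah | hha
  · exact (hle a ⟨ha.1, hah⟩).le
  · rw [hU, integral_u1_mul_density_of_ge hf hh0.le hh1 hha, hsq]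
    have hk1 : k - 1 = (P + 1) * (1 - h) := by
      rw [← hlin]
      field_simp [show 1 - h ≠ 0 by linarith]
    linarith [mul_le_mul_of_nonneg_right hha (by linarith : (0 : ℝ) ≤ P + 1)]
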